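/- For d > 0 and p² = (1+2d)/d², the function x ↦ (1/(π(√(1+p²) - 1)))·√(p² - x²)/(1+x²) on [-p, p] integrates to 1. -/

import Mathlib

/-!
With `c = √(1 + p²)`, the function
`F x = c · arcsin (c x / (p √(1 + x²))) - arcsin (x / p)` is continuous on `ℝ` and has
derivative `(c² - 1 - x²) / ((1 + x²) √(p² - x²)) = √(p² - x²) / (1 + x²)` on `(-p, p)`.
Since `F (±p) = ±(c - 1) π / 2`, the integral of `√(p² - x²) / (1 + x²)` over `[-p, p]` is
`π (c - 1)`, which is exactly the normalising constant.
-/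

open Real Set

lemma hasDerivAt_div_sqrt_one_add_sq (x : ℝ) :
    HasDerivAt (fun y => y / √(1 + y ^ 2)) (1 / √(1 + x ^ 2) ^ 3) x := by
  have ht : 0 < √(1 + x ^ 2) := sqrt_pos.mpr (by positivity)
  have ht2 : √(1 + x ^ 2) ^ 2 = 1 + x ^ 2 := sq_sqrt (by positivity)
  have hsqrt : HasDerivAt (fun y => √(1 + y ^ 2)) (x / √(1 + x ^ 2)) x := by
    refine (((hasDerivAt_pow 2 x).const_add 1).sqrt (by positivity)).congr_deriv ?_
    field_simp
    norm_num
  refine ((hasDerivAt_id x).div hsqrt ht.ne').congr_deriv ?_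
  field_simp
  rw [ht2]
  simp only [id]
  ring

lemma hasDerivAt_arcsin_div {p x : ℝ} (hx : x ∈ Ioo (-p) p) :
    HasDerivAt (fun y => arcsin (y / p)) (1 / √(p ^ 2 - x ^ 2)) x := by
  obtain ⟨hlo, hhi⟩ := hx
  have hp : 0 < p := by linarith
  have hsqrt : √(1 - (x / p) ^ 2) = √(p ^ 2 - x ^ 2) / p := by
    rw [show 1 - (x / p) ^ 2 = (p ^ 2 - x ^ 2) / p ^ 2 by field_simp, sqrt_div' _ (by positivity),
      sqrt_sq hp.le]
  have hlt : x / p < 1 := (div_lt_one hp).mpr hhi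
  have hgt : -1 < x / p := by rwa [lt_div_iff₀ hp, neg_one_mul]
  refine ((hasDerivAt_arcsin hgt.ne' hlt.ne).comp x ((hasDerivAt_id x).div_const p)).congr_deriv ?_
  rw [hsqrt]
  field_simp

lemma one_sub_sq_mul_div_sqrt_one_add_sq {p c x : ℝ} (hp : p ≠ 0) (hc : c ^ 2 = 1 + p ^ 2) :
    1 - (c / p * (x / √(1 + x ^ 2))) ^ 2 = (p ^ 2 - x ^ 2) / (p ^ 2 * (1 + x ^ 2)) := by
  have ht2 : √(1 + x ^ 2) ^ 2 = 1 + x ^ 2 := sq_sqrt (by positivity)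
  rw [mul_pow, div_pow, div_pow, ht2, hc]
  field_simp
  ring

lemma hasDerivAt_arcsin_mul_div_sqrt_one_add_sq {p c x : ℝ} (hc : c ^ 2 = 1 + p ^ 2)
    (hx : x ∈ Ioo (-p) p) :
    HasDerivAt (fun y => arcsin (c / p * (y / √(1 + y ^ 2))))
      (c / ((1 + x ^ 2) * √(p ^ 2 - x ^ 2))) x := by
  obtain ⟨hlo, hhi⟩ := hx
  have hp : 0 < p := by linarith
  have ht : 0 < √(1 + x ^ 2) := sqrt_pos.mpr (by positivity)
  have ht2 : √(1 + x ^ 2) ^ 2 = 1 + x ^ 2 := sq_sqrt (by positivity)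
  have hkey := one_sub_sq_mul_div_sqrt_one_add_sq (x := x) hp.ne' hc
  have hsqrt :
      √(1 - (c / p * (x / √(1 + x ^ 2))) ^ 2) = √(p ^ 2 - x ^ 2) / (p * √(1 + x ^ 2)) := by
    rw [hkey, sqrt_div' _ (by positivity), sqrt_mul' _ (by positivity), sqrt_sq hp.le]
  have hlt : (c / p * (x / √(1 + x ^ 2))) ^ 2 < 1 := by
    have : 0 < (p ^ 2 - x ^ 2) / (p ^ 2 * (1 + x ^ 2)) := by
      apply div_pos <;> nlinarith
    linarith
  have hne : ∀ a : ℝ, a ^ 2 < 1 → a ≠ -1 ∧ a ≠ 1 := fun a ha =>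
    ⟨by rintro rfl; norm_num at ha, by rintro rfl; norm_num at ha⟩
  obtain ⟨h1, h2⟩ := hne _ hlt
  refine ((hasDerivAt_arcsin h1 h2).comp x
    ((hasDerivAt_div_sqrt_one_add_sq x).const_mul (c / p))).congr_deriv ?_
  rw [hsqrt]
  field_simp
  rw [ht2]

noncomputable def huaPickrellAntideriv (p x : ℝ) : ℝ :=
  √(1 + p ^ 2) * arcsin (√(1 + p ^ 2) / p * (x / √(1 + x ^ 2))) - arcsin (x / p)

lemma hasDerivAt_huaPickrellAntideriv {p x : ℝ} (hx : x ∈ Ioo (-p) p) :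
    HasDerivAt (huaPickrellAntideriv p) (√(p ^ 2 - x ^ 2) / (1 + x ^ 2)) x := by
  have hc : √(1 + p ^ 2) ^ 2 = 1 + p ^ 2 := sq_sqrt (by positivity)
  have hs2 : √(p ^ 2 - x ^ 2) ^ 2 = p ^ 2 - x ^ 2 := sq_sqrt (by nlinarith [hx.1, hx.2])
  have hs : 0 < √(p ^ 2 - x ^ 2) := sqrt_pos.mpr (by nlinarith [hx.1, hx.2])
  refine (((hasDerivAt_arcsin_mul_div_sqrt_one_add_sq hc hx).const_mul _).sub
    (hasDerivAt_arcsin_div hx)).congr_deriv ?_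
  field_simp
  rw [hc, hs2]
  ring

lemma continuous_huaPickrellAntideriv (p : ℝ) : Continuous (huaPickrellAntideriv p) := by
  unfold huaPickrellAntideriv
  have hne : ∀ x : ℝ, √(1 + x ^ 2) ≠ 0 := fun x => (sqrt_pos.mpr (by positivity)).ne'
  fun_prop (disch := exact hne _)

lemma huaPickrellAntideriv_self {p : ℝ} (hp : 0 < p) :
    huaPickrellAntideriv p p = (√(1 + p ^ 2) - 1) * (π / 2) := by
  have ht : 0 < √(1 + p ^ 2) := sqrt_pos.mpr (by positivity)
  have : √(1 + p ^ 2) / p * (p / √(1 + p ^ 2)) = 1 := by field_simp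
  rw [huaPickrellAntideriv, this, div_self hp.ne', arcsin_one]
  ring

lemma huaPickrellAntideriv_neg (p x : ℝ) :
    huaPickrellAntideriv p (-x) = -huaPickrellAntideriv p x := by
  simp only [huaPickrellAntideriv, neg_sq, neg_div, mul_neg, arcsin_neg]
  ring

lemma integral_sqrt_sub_sq_div_one_add_sq {p : ℝ} (hp : 0 < p) :
    ∫ x in (-p)..p, √(p ^ 2 - x ^ 2) / (1 + x ^ 2) = π * (√(1 + p ^ 2) - 1) := by
  have hf : Continuous fun x : ℝ => √(p ^ 2 - x ^ 2) / (1 + x ^ 2) :=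
    by fun_prop (disch := intro x; positivity)
  rw [intervalIntegral.integral_eq_sub_of_hasDerivAt_of_le (by linarith)
    (continuous_huaPickrellAntideriv p).continuousOn
    (fun _ hx => hasDerivAt_huaPickrellAntideriv hx)
    (hf.intervalIntegrable _ _), huaPickrellAntideriv_neg, huaPickrellAntideriv_self hp]
  ring

theorem HP_pushforward_is_probability_general (p : ℝ) (hp : 0 < p) :
    ∫ x in (-p)..p,
        (1 / (Real.pi * (Real.sqrt (1 + p ^ 2) - 1)))
          * Real.sqrt (p ^ 2 - x ^ 2) / (1 + x ^ 2) = 1 := by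
  have hc : 1 < √(1 + p ^ 2) := by
    rw [lt_sqrt zero_le_one]; nlinarith
  simp_rw [mul_div_assoc]
  rw [intervalIntegral.integral_const_mul, integral_sqrt_sub_sq_div_one_add_sq hp,
    one_div_mul_cancel (by positivity)]

theorem HP_pushforward_is_probability (d p : ℝ) (hd : 0 < d) (hp : 0 < p)
    (hp2 : p ^ 2 = (1 + 2 * d) / d ^ 2) :
    ∫ x in (-p)..p,
        (1 / (Real.pi * (Real.sqrt (1 + p ^ 2) - 1)))
          * Real.sqrt (p ^ 2 - x ^ 2) / (1 + x ^ 2) = 1 :=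
  HP_pushforward_is_probability_general p hp
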